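/- arXiv:2502.08308 — 6 statements merged into one kernel-verified Lean document; each statement's English description precedes it below -/
import Mathlib

section
/- Let $\{a_k\}_{k\ge 0}$ be a non-negative real sequence, let $\xi > 0$, and define $b_k = \sum_{j=0}^k a_j$. Then for every $k \ge 0$, $\sum_{j=0}^k \frac{a_j}{\xi + b_j} \le \log\left(\frac{\xi + b_k}{\xi}\right)$. -/
lemma key_step (x y : ℝ) (hx : 0 < x) (hxy : x ≤ y) :
    (y - x) / y ≤ Real.log y - Real.log x := by
  have hy : 0 < y := lt_of_lt_of_le hx hxy
  have h := Real.log_le_sub_one_of_pos (div_pos hx hy)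
  rw [Real.log_div hx.ne' hy.ne'] at h
  have : (y - x) / y = 1 - x / y := by field_simp
  linarith

theorem stmt0 (a : ℕ → ℝ) (ha : ∀ j, 0 ≤ a j) (ξ : ℝ) (hξ : 0 < ξ)
    (b : ℕ → ℝ) (hb : ∀ k, b k = ∑ j ∈ Finset.range (k + 1), a j) (k : ℕ) :
    ∑ j ∈ Finset.range (k + 1), a j / (ξ + b j) ≤ Real.log ((ξ + b k) / ξ) := by
  have hbnn : ∀ k, 0 ≤ b k := fun k => by
    rw [hb k]; exact Finset.sum_nonneg fun j _ => ha j
  have hpos : ∀ k, 0 < ξ + b k := fun k => by linarith [hbnn k]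
  induction k with
  | zero =>
    simp only [zero_add, Finset.sum_range_one]
    rw [Real.log_div (hpos 0).ne' hξ.ne']
    have h := key_step ξ (ξ + b 0) hξ (by linarith [hbnn 0])
    have : b 0 = a 0 := by rw [hb 0]; simp
    rw [this] at h ⊢
    have h2 : ξ + a 0 - ξ = a 0 := by ring
    rw [h2] at h
    linarith
  | succ n ih =>
    rw [Finset.sum_range_succ]
    have hstep : b (n + 1) = b n + a (n + 1) := by
      rw [hb (n+1), hb n, Finset.sum_range_succ]
    have h := key_step (ξ + b n) (ξ + b (n + 1)) (hpos n)
      (by rw [hstep]; linarith [ha (n+1)])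
    rw [Real.log_div (hpos (n+1)).ne' hξ.ne'] at *
    rw [Real.log_div (hpos n).ne' hξ.ne'] at ih
    have : ξ + b (n+1) - (ξ + b n) = a (n+1) := by rw [hstep]; ring
    rw [this] at h
    linarith
end

section
/- Let $f : \mathbb{R}^n \to \mathbb{R}$ be continuously differentiable with $L$-Lipschitz gradient $g$. Let $x \in \mathbb{R}^n$, let $\mathcal{O}$ and $\mathcal{D}$ be a partition of $\{1,\dots,n\}$, and let $s \in \mathbb{R}^n$ satisfy: $s_i = -g_i(x)/w_i^{\mathcal{O}}$ for $i \in \mathcal{O}$ with weights $w_i^{\mathcal{O}} > 0$; $|s_i| \le |x_i|/w_i^{\mathcal{D}}$ for $i \in \mathcal{D}$ with weights $w_i^{\mathcal{D}} > 0$; and $\sum_{i \in \mathcal{D}} g_i(x) s_i \le 0$. Then $f(x+s) \le f(x) - \sum_{i \in \mathcal{O}} \frac{g_i(x)^2}{w_i^{\mathcal{O}}} + \frac{L}{2}\sum_{i \in \mathcal{O}} \frac{g_i(x)^2}{(w_i^{\mathcal{O}})^2} + \frac{L}{2}\sum_{i \in \mathcal{D}} \frac{x_i^2}{(w_i^{\mathcal{D}})^2}$.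 -/
open intervalIntegral in
lemma descent {E : Type*} [NormedAddCommGroup E] [InnerProductSpace ℝ E] [CompleteSpace E]
    (f : E → ℝ) (L : ℝ) (hL : 0 ≤ L) (hf : ContDiff ℝ 1 f)
    (hlip : ∀ x y, ‖gradient f x - gradient f y‖ ≤ L * ‖x - y‖)
    (x v : E) :
    f (x + v) ≤ f x + inner ℝ (gradient f x) v + L / 2 * ‖v‖ ^ 2 := by
  have hdiff : Differentiable ℝ f := hf.differentiable one_ne_zero
  set g := gradient f with hg
  have hgc : Continuous fun t : ℝ => g (x + t • v) := by
    have : LipschitzWith (Real.toNNReal L) g := by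
      refine LipschitzWith.of_dist_le_mul fun a b => ?_
      simpa [dist_eq_norm, Real.coe_toNNReal L hL] using hlip a b
    exact this.continuous.comp (by continuity)
  have hderiv : ∀ t : ℝ, HasDerivAt (fun t : ℝ => f (x + t • v))
      (inner ℝ (g (x + t • v)) v) t := by
    intro t
    have hline : HasDerivAt (fun t : ℝ => x + t • v) v t := by
      simpa using ((hasDerivAt_id t).smul_const v).const_add x
    have hF : HasFDerivAt f (InnerProductSpace.toDual ℝ E (g (x + t • v))) (x + t • v) := by
      rw [← hasGradientAt_iff_hasFDerivAt]
      exact (hdiff _).hasGradientAt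
    have hc := hF.comp_hasDerivAt t hline
    simp at hc
    exact hc
  have hint : Continuous fun t : ℝ => (inner ℝ (g (x + t • v)) v : ℝ) :=
    (hgc.inner continuous_const)
  have key : f (x + v) - f x = ∫ t in (0:ℝ)..1, inner ℝ (g (x + t • v)) v := by
    rw [intervalIntegral.integral_eq_sub_of_hasDerivAt (fun t _ => hderiv t)
      (hint.intervalIntegrable 0 1)]
    simp
  have hbound : (∫ t in (0:ℝ)..1, (inner ℝ (g (x + t • v)) v : ℝ))
      ≤ ∫ t in (0:ℝ)..1, (inner ℝ (g x) v + L * ‖v‖ ^ 2 * t) := by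
    apply intervalIntegral.integral_mono_on zero_le_one (hint.intervalIntegrable 0 1)
    · exact (Continuous.intervalIntegrable (by continuity) 0 1)
    · intro t ht
      have : (inner ℝ (g (x + t • v)) v : ℝ) - inner ℝ (g x) v
          = inner ℝ (g (x + t • v) - g x) v := by
        rw [inner_sub_left]
      have hcs : (inner ℝ (g (x + t • v) - g x) v : ℝ) ≤ ‖g (x + t • v) - g x‖ * ‖v‖ :=
        real_inner_le_norm _ _
      have hl : ‖g (x + t • v) - g x‖ ≤ L * (t * ‖v‖) := by
        have := hlip (x + t • v) x
        simpa [norm_smul, abs_of_nonneg ht.1, mul_assoc] using this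
      nlinarith [norm_nonneg v, mul_le_mul_of_nonneg_right hl (norm_nonneg v)]
  have hval : (∫ t in (0:ℝ)..1, (inner ℝ (g x) v + L * ‖v‖ ^ 2 * t : ℝ))
      = inner ℝ (g x) v + L / 2 * ‖v‖ ^ 2 := by
    have hig : IntervalIntegrable (fun t : ℝ => L * ‖v‖ ^ 2 * t) MeasureTheory.volume 0 1 :=
      ((continuous_const.mul continuous_id').intervalIntegrable 0 1)
    rw [intervalIntegral.integral_add (intervalIntegrable_const) hig,
      intervalIntegral.integral_const]
    have : (∫ t in (0:ℝ)..1, L * ‖v‖ ^ 2 * t) = L * ‖v‖ ^ 2 * (1 / 2) := by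
      rw [intervalIntegral.integral_const_mul]
      simp [integral_id]
    rw [this, sub_zero, one_smul]; ring
  linarith [key, hbound, hval.le, hval.ge]

theorem stmt3 {n : ℕ} (f : EuclideanSpace ℝ (Fin n) → ℝ) (L : ℝ) (hL : 0 ≤ L)
    (hf : ContDiff ℝ 1 f)
    (hlip : ∀ x y, ‖gradient f x - gradient f y‖ ≤ L * ‖x - y‖)
    (x s : EuclideanSpace ℝ (Fin n)) (O D : Finset (Fin n))
    (hpart : O ∪ D = Finset.univ) (hdisj : Disjoint O D)
    (wO wD : Fin n → ℝ) (hwO : ∀ i ∈ O, 0 < wO i) (hwD : ∀ i ∈ D, 0 < wD i)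
    (hsO : ∀ i ∈ O, s i = -(gradient f x i) / wO i)
    (hsD : ∀ i ∈ D, |s i| ≤ |x i| / wD i)
    (hdec : ∑ i ∈ D, gradient f x i * s i ≤ 0) :
    f (x + s) ≤ f x - ∑ i ∈ O, (gradient f x i) ^ 2 / wO i
      + L / 2 * ∑ i ∈ O, (gradient f x i) ^ 2 / (wO i) ^ 2
      + L / 2 * ∑ i ∈ D, (x i) ^ 2 / (wD i) ^ 2 := by
  have hmain := descent f L hL hf hlip x s
  set g := gradient f x with hg
  have hinner : (inner ℝ g s : ℝ) = ∑ i, g i * s i := by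
    simp [PiLp.inner_apply, RCLike.inner_apply, mul_comm]
  have hnorm : ‖s‖ ^ 2 = ∑ i, s i ^ 2 := by
    rw [EuclideanSpace.norm_eq, Real.sq_sqrt (by positivity)]
    exact Finset.sum_congr rfl fun i _ => by rw [Real.norm_eq_abs, sq_abs]
  rw [hinner, hnorm, ← hpart, Finset.sum_union hdisj, Finset.sum_union hdisj] at hmain
  have h1 : ∑ i ∈ O, g i * s i = -∑ i ∈ O, g i ^ 2 / wO i := by
    rw [← Finset.sum_neg_distrib]
    refine Finset.sum_congr rfl fun i hi => ?_
    rw [hsO i hi]; field_simp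
  have h2 : ∑ i ∈ O, s i ^ 2 = ∑ i ∈ O, g i ^ 2 / wO i ^ 2 := by
    refine Finset.sum_congr rfl fun i hi => ?_
    rw [hsO i hi, div_pow]; ring_nf
  have h3 : ∑ i ∈ D, s i ^ 2 ≤ ∑ i ∈ D, x i ^ 2 / wD i ^ 2 := by
    refine Finset.sum_le_sum fun i hi => ?_
    have h := hsD i hi
    have hw := hwD i hi
    have : s i ^ 2 ≤ (|x i| / wD i) ^ 2 := by
      rw [← sq_abs (s i)]
      exact pow_le_pow_left₀ (abs_nonneg _) h 2
    calc s i ^ 2 ≤ (|x i| / wD i) ^ 2 := this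
      _ = x i ^ 2 / wD i ^ 2 := by rw [div_pow, sq_abs]
  rw [h1, h2] at hmain
  have hL2 : L / 2 * (∑ i ∈ O, g i ^ 2 / wO i ^ 2 + ∑ i ∈ D, s i ^ 2)
      ≤ L / 2 * (∑ i ∈ O, g i ^ 2 / wO i ^ 2 + ∑ i ∈ D, x i ^ 2 / wD i ^ 2) := by
    apply mul_le_mul_of_nonneg_left (by linarith) (by linarith)
  linarith
end

section
/- Let $\{x_{j}\}_{j \ge 0}$ be vectors in $\mathbb{R}^n$ with $|x_{i,j}| \le \kappa_x$ for all $i, j$, let $\varsigma > 0$, and define for each $i$ the weights $w_{i,j}^2 = \varsigma + \sum_{\ell=0}^j x_{i,\ell}^2$. Then for every $k \ge 0$, $\sum_{i=1}^n \sum_{j=0}^k \frac{x_{i,j}^2}{w_{i,j}^2} \le n\log\left(1 + \frac{(k+1)\kappa_x^2}{\varsigma}\right)$. -/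
lemma aux_ratio_le_log {s t : ℝ} (ht : 0 < t) (hst : t ≤ s) :
    (s - t) / s ≤ Real.log s - Real.log t := by
  have hs : 0 < s := lt_of_lt_of_le ht hst
  have h := Real.log_le_sub_one_of_pos (div_pos ht hs)
  rw [Real.log_div (ne_of_gt ht) (ne_of_gt hs)] at h
  have : (s - t) / s = 1 - t / s := by field_simp
  linarith

lemma aux_sum_log {ς : ℝ} (hς : 0 < ς) (a : ℕ → ℝ) (ha : ∀ j, 0 ≤ a j) (k : ℕ) :
    ∑ j ∈ Finset.range (k + 1), a j / (ς + ∑ ℓ ∈ Finset.range (j + 1), a ℓ)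
      ≤ Real.log (ς + ∑ ℓ ∈ Finset.range (k + 1), a ℓ) - Real.log ς := by
  induction k with
  | zero =>
    have hst : ς ≤ ς + a 0 := by linarith [ha 0]
    have := aux_ratio_le_log hς hst
    simpa using this
  | succ k ih =>
    rw [Finset.sum_range_succ, Finset.sum_range_succ (f := a)]
    have hpos : 0 < ς + ∑ ℓ ∈ Finset.range (k + 1), a ℓ := by
      have : 0 ≤ ∑ ℓ ∈ Finset.range (k + 1), a ℓ := Finset.sum_nonneg fun i _ => ha i
      linarith
    have hst : ς + ∑ ℓ ∈ Finset.range (k + 1), a ℓ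
        ≤ ς + (∑ ℓ ∈ Finset.range (k + 1), a ℓ + a (k + 1)) := by linarith [ha (k + 1)]
    have h2 := aux_ratio_le_log hpos hst
    have hsimp : (ς + (∑ ℓ ∈ Finset.range (k + 1), a ℓ + a (k + 1)))
        - (ς + ∑ ℓ ∈ Finset.range (k + 1), a ℓ) = a (k + 1) := by ring
    rw [hsimp] at h2
    linarith

theorem stmt7 {n : ℕ} (x : ℕ → Fin n → ℝ) (κ ς : ℝ) (hς : 0 < ς)
    (hb : ∀ j i, |x j i| ≤ κ) (k : ℕ) :
    ∑ i, ∑ j ∈ Finset.range (k + 1),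
      (x j i) ^ 2 / (ς + ∑ ℓ ∈ Finset.range (j + 1), (x ℓ i) ^ 2)
      ≤ n * Real.log (1 + ((k : ℝ) + 1) * κ ^ 2 / ς) := by
  have hsq : ∀ j i, (x j i) ^ 2 ≤ κ ^ 2 := fun j i => by
    have := hb j i
    have := abs_nonneg (x j i)
    nlinarith [sq_abs (x j i)]
  have key : ∀ i : Fin n, ∑ j ∈ Finset.range (k + 1),
      (x j i) ^ 2 / (ς + ∑ ℓ ∈ Finset.range (j + 1), (x ℓ i) ^ 2)
      ≤ Real.log (1 + ((k : ℝ) + 1) * κ ^ 2 / ς) := by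
    intro i
    have h1 := aux_sum_log hς (fun j => (x j i) ^ 2) (fun j => sq_nonneg _) k
    have hS : ∑ ℓ ∈ Finset.range (k + 1), (x ℓ i) ^ 2 ≤ ((k : ℝ) + 1) * κ ^ 2 := by
      calc ∑ ℓ ∈ Finset.range (k + 1), (x ℓ i) ^ 2
          ≤ ∑ ℓ ∈ Finset.range (k + 1), κ ^ 2 :=
            Finset.sum_le_sum fun ℓ _ => hsq ℓ i
        _ = ((k : ℝ) + 1) * κ ^ 2 := by
            simp [Finset.sum_const]
    have hSpos : 0 ≤ ∑ ℓ ∈ Finset.range (k + 1), (x ℓ i) ^ 2 :=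
      Finset.sum_nonneg fun ℓ _ => sq_nonneg _
    have h2 : Real.log (ς + ∑ ℓ ∈ Finset.range (k + 1), (x ℓ i) ^ 2) - Real.log ς
        ≤ Real.log (1 + ((k : ℝ) + 1) * κ ^ 2 / ς) := by
      have heq : Real.log (1 + ((k : ℝ) + 1) * κ ^ 2 / ς)
          = Real.log (ς + ((k : ℝ) + 1) * κ ^ 2) - Real.log ς := by
        rw [← Real.log_div (by nlinarith [hsq 0 i, sq_nonneg κ]) (ne_of_gt hς)]
        congr 1
        field_simp
      rw [heq]
      have : Real.log (ς + ∑ ℓ ∈ Finset.range (k + 1), (x ℓ i) ^ 2)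
          ≤ Real.log (ς + ((k : ℝ) + 1) * κ ^ 2) :=
        Real.log_le_log (by linarith) (by linarith)
      linarith
    linarith
  calc ∑ i, ∑ j ∈ Finset.range (k + 1),
        (x j i) ^ 2 / (ς + ∑ ℓ ∈ Finset.range (j + 1), (x ℓ i) ^ 2)
      ≤ ∑ _i : Fin n, Real.log (1 + ((k : ℝ) + 1) * κ ^ 2 / ς) :=
        Finset.sum_le_sum fun i _ => key i
    _ = n * Real.log (1 + ((k : ℝ) + 1) * κ ^ 2 / ς) := by
        simp [Finset.sum_const]
end

section
/- Let $\{g_j\}_{j \ge 0}$ be vectors in $\mathbb{R}^n$, $\varsigma > 0$, and define for each $i$ the weights $w_{i,j}^2 = \varsigma + \sum_{\ell=0}^j g_{i,\ell}^2$. Then for every $k \ge 0$, $\sum_{i=1}^n \sum_{j=0}^k \frac{g_{i,j}^2}{w_{i,j}^2} \le n\log\left(1 + \frac{1}{\varsigma}\sum_{\ell=0}^k \|g_\ell\|^2\right)$. -/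
private lemma key_ineq (b c : ℝ) (hb : 0 < b) (hbc : b ≤ c) :
    (c - b) / c ≤ Real.log c - Real.log b := by
  have hc : 0 < c := lt_of_lt_of_le hb hbc
  have h := Real.log_le_sub_one_of_pos (show (0:ℝ) < b / c from div_pos hb hc)
  rw [Real.log_div (ne_of_gt hb) (ne_of_gt hc)] at h
  have : b / c - 1 = (b - c) / c := by field_simp
  rw [this] at h
  have : (c - b) / c = -((b - c) / c) := by ring
  rw [this]
  linarith

private lemma aux (a : ℕ → ℝ) (ha : ∀ j, 0 ≤ a j) (ς : ℝ) (hς : 0 < ς) (k : ℕ) :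
    ∑ j ∈ Finset.range (k + 1), a j / (ς + ∑ ℓ ∈ Finset.range (j + 1), a ℓ)
      ≤ Real.log (ς + ∑ ℓ ∈ Finset.range (k + 1), a ℓ) - Real.log ς := by
  induction k with
  | zero =>
    have h := key_ineq ς (ς + a 0) hς (by linarith [ha 0])
    have e : ς + a 0 - ς = a 0 := by ring
    rw [e] at h
    simpa using h
  | succ k ih =>
    rw [Finset.sum_range_succ]
    have hP : ∀ m, 0 ≤ ∑ ℓ ∈ Finset.range m, a ℓ := fun m =>
      Finset.sum_nonneg fun ℓ _ => ha ℓ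
    have hstep := key_ineq (ς + ∑ ℓ ∈ Finset.range (k + 1), a ℓ)
      (ς + ∑ ℓ ∈ Finset.range (k + 2), a ℓ)
      (by linarith [hP (k + 1)])
      (by have := Finset.sum_range_succ a (k + 1); linarith [ha (k + 1)])
    have heq : (ς + ∑ ℓ ∈ Finset.range (k + 2), a ℓ) -
        (ς + ∑ ℓ ∈ Finset.range (k + 1), a ℓ) = a (k + 1) := by
      rw [Finset.sum_range_succ]; ring
    rw [heq] at hstep
    linarith

theorem stmt8 {n : ℕ} (g : ℕ → Fin n → ℝ) (ς : ℝ) (hς : 0 < ς) (k : ℕ) :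
    ∑ i, ∑ j ∈ Finset.range (k + 1),
      (g j i) ^ 2 / (ς + ∑ ℓ ∈ Finset.range (j + 1), (g ℓ i) ^ 2)
      ≤ n * Real.log (1 + (1 / ς) * ∑ ℓ ∈ Finset.range (k + 1), ∑ i, (g ℓ i) ^ 2) := by
  set T := ∑ ℓ ∈ Finset.range (k + 1), ∑ i, (g ℓ i) ^ 2 with hT
  have hTnn : 0 ≤ T := Finset.sum_nonneg fun ℓ _ =>
    Finset.sum_nonneg fun i _ => sq_nonneg _
  have hbound : ∀ i : Fin n,
      ∑ j ∈ Finset.range (k + 1),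
        (g j i) ^ 2 / (ς + ∑ ℓ ∈ Finset.range (j + 1), (g ℓ i) ^ 2)
        ≤ Real.log (1 + (1 / ς) * T) := by
    intro i
    have h1 := aux (fun j => (g j i) ^ 2) (fun j => sq_nonneg _) ς hς k
    have hSi : ∑ ℓ ∈ Finset.range (k + 1), (g ℓ i) ^ 2 ≤ T := by
      rw [hT]
      apply Finset.sum_le_sum
      intro ℓ _
      exact Finset.single_le_sum (fun i' _ => sq_nonneg (g ℓ i')) (Finset.mem_univ i)
    have hSnn : 0 ≤ ∑ ℓ ∈ Finset.range (k + 1), (g ℓ i) ^ 2 :=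
      Finset.sum_nonneg fun ℓ _ => sq_nonneg _
    have h2 : Real.log (ς + ∑ ℓ ∈ Finset.range (k + 1), (g ℓ i) ^ 2) - Real.log ς
        ≤ Real.log (1 + (1 / ς) * T) := by
      have heq : Real.log (1 + (1 / ς) * T)
          = Real.log (ς + T) - Real.log ς := by
        rw [← Real.log_div (by positivity) (ne_of_gt hς)]
        congr 1
        field_simp
      rw [heq]
      have : Real.log (ς + ∑ ℓ ∈ Finset.range (k + 1), (g ℓ i) ^ 2)
          ≤ Real.log (ς + T) :=
        Real.log_le_log (by positivity) (by linarith)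
      linarith
    linarith
  calc ∑ i, ∑ j ∈ Finset.range (k + 1),
        (g j i) ^ 2 / (ς + ∑ ℓ ∈ Finset.range (j + 1), (g ℓ i) ^ 2)
      ≤ ∑ _i : Fin n, Real.log (1 + (1 / ς) * T) :=
        Finset.sum_le_sum fun i _ => hbound i
    _ = n * Real.log (1 + (1 / ς) * T) := by
        rw [Finset.sum_const, Finset.card_univ, Fintype.card_fin, nsmul_eq_mul]
end

section
/- Let $S \ge 0$ and suppose $\frac{\sqrt{\varsigma}}{2}\sqrt{\frac{2S}{\varsigma}} \le 4nL\log\left(\sqrt{\frac{2S}{\varsigma}}\right)$ with $\varsigma > 0$, $n \ge 1$, $L > 0$ and $\varsigma \le (8nL/3)^2$. Then $S \le 32 n^2 L^2 \left|W_{-1}\left(-\frac{\sqrt{\varsigma}}{8nL}\right)\right|^2$. -/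
theorem stmt14 (S ς L : ℝ) (n : ℕ) (hS : 0 ≤ S) (hς : 0 < ς) (hn : 1 ≤ n)
    (hL : 0 < L) (hςb : ς ≤ (8 * n * L / 3) ^ 2)
    (h : Real.sqrt ς / 2 * Real.sqrt (2 * S / ς) ≤
      4 * n * L * Real.log (Real.sqrt (2 * S / ς)))
    (w : ℝ) (hw1 : w ≤ -1)
    (hw2 : w * Real.exp w = -(Real.sqrt ς / (8 * n * L))) :
    S ≤ 32 * n ^ 2 * L ^ 2 * |w| ^ 2 := by
  have hn' : (1:ℝ) ≤ n := by exact_mod_cast hn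
  have hnpos : (0:ℝ) < n := by linarith
  set a : ℝ := Real.sqrt ς / 2 with ha_def
  set b : ℝ := 4 * (n:ℝ) * L with hb_def
  have hςs : 0 < Real.sqrt ς := Real.sqrt_pos.mpr hς
  have ha : 0 < a := by positivity
  have hb : 0 < b := by positivity
  have hw0 : w < 0 := lt_of_le_of_lt hw1 (by norm_num)
  set u : ℝ := Real.sqrt (2 * S / ς) with hu_def
  have hu0 : 0 ≤ u := Real.sqrt_nonneg _
  have husq : u ^ 2 = 2 * S / ς := Real.sq_sqrt (by positivity)
  set u2 : ℝ := b / a * (-w) with hu2_def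
  have hnw : 1 ≤ -w := by linarith
  have hu2pos : 0 < u2 := by
    apply mul_pos (div_pos hb ha); linarith
  -- w * exp w = -(a/b)
  have hab : Real.sqrt ς / (8 * ↑n * L) = a / b := by
    rw [ha_def, hb_def]; ring
  have hwexp : (-w) * Real.exp w = a / b := by
    rw [← hab]; linarith [hw2]
  have hlognw : Real.log (-w) + w = Real.log (a / b) := by
    have := congrArg Real.log hwexp
    rwa [Real.log_mul (by linarith) (Real.exp_ne_zero w), Real.log_exp] at this
  have hlogu2 : Real.log u2 = -w := by
    rw [hu2_def, Real.log_mul (by positivity) (by linarith),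
      Real.log_div (ne_of_gt hb) (ne_of_gt ha)]
    have := Real.log_div (ne_of_gt ha) (ne_of_gt hb)
    linarith
  have hkey : b * Real.log u2 = a * u2 := by
    rw [hlogu2, hu2_def]; field_simp
  -- b / u2 ≤ a
  have hbu2 : b / u2 ≤ a := by
    rw [div_le_iff₀ hu2pos, hu2_def]
    have : b / a * 1 ≤ b / a * (-w) := by
      apply mul_le_mul_of_nonneg_left hnw (le_of_lt (div_pos hb ha))
    have h2 : b / a ≤ b / a * (-w) := by linarith
    calc b = a * (b / a) := by field_simp
    _ ≤ a * (b / a * (-w)) := by nlinarith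
  -- main claim: u ≤ u2
  have hu_le : u ≤ u2 := by
    by_contra hc
    push_neg at hc
    have hupos : 0 < u := lt_trans hu2pos hc
    have hx : Real.log (u / u2) < u / u2 - 1 := by
      apply Real.log_lt_sub_one_of_pos (by positivity)
      apply ne_of_gt
      rw [lt_div_iff₀ hu2pos]; linarith
    rw [Real.log_div (ne_of_gt hupos) (ne_of_gt hu2pos)] at hx
    have h1 : b * Real.log u < b * Real.log u2 + b / u2 * (u - u2) := by
      have := mul_lt_mul_of_pos_left hx hb
      rw [div_sub' (ne_of_gt hu2pos), mul_one] at this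
      have hb2 : b * ((u - u2) / u2) = b / u2 * (u - u2) := by ring
      linarith [this, hb2]
    have h2 : b / u2 * (u - u2) ≤ a * (u - u2) := by
      apply mul_le_mul_of_nonneg_right hbu2 (by linarith)
    have hcontra : b * Real.log u < a * u := by
      calc b * Real.log u < b * Real.log u2 + b / u2 * (u - u2) := h1
      _ ≤ a * u2 + a * (u - u2) := by linarith [hkey]
      _ = a * u := by ring
    have : a * u ≤ b * Real.log u := h
    linarith
  -- conclude
  have hsq : u ^ 2 ≤ u2 ^ 2 := by nlinarith
  have hS2 : 2 * S / ς ≤ u2 ^ 2 := by rw [← husq]; exact hsq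
  have ha2 : a ^ 2 = ς / 4 := by
    rw [ha_def]; rw [div_pow, Real.sq_sqrt (le_of_lt hς)]; ring
  have habs : |w| ^ 2 = w ^ 2 := sq_abs w
  rw [habs]
  have hSle : S ≤ ς / 2 * u2 ^ 2 := by
    rw [div_le_iff₀ hς] at hS2
    linarith [hS2]
  have hval : ς / 2 * u2 ^ 2 = 2 * b ^ 2 * w ^ 2 := by
    have hu22 : u2 ^ 2 = b ^ 2 / a ^ 2 * w ^ 2 := by rw [hu2_def]; ring
    have hca : ς = 4 * a ^ 2 := by linarith [ha2]
    rw [hu22, hca]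
    have hrw : 4 * a ^ 2 / 2 * (b ^ 2 / a ^ 2 * w ^ 2) =
        2 * b ^ 2 * w ^ 2 * (a ^ 2 / a ^ 2) := by ring
    rw [hrw, div_self (by positivity), mul_one]
  have hb2 : b ^ 2 = 16 * (n:ℝ) ^ 2 * L ^ 2 := by rw [hb_def]; ring
  calc S ≤ ς / 2 * u2 ^ 2 := hSle
  _ = 2 * b ^ 2 * w ^ 2 := hval
  _ = 32 * (n:ℝ) ^ 2 * L ^ 2 * w ^ 2 := by rw [hb2]; ring
end

section
/- Let $g \in \mathbb{R}^n$, $T \in \{1,\dots,n\}$, $\tau > 0$, and let $\mathcal{R}$ be the set of indices of the $T$ largest components of $|g|$ (assume $\|g\|_{\mathcal{R}} = (\sum_{i\in\mathcal{R}} g_i^2)^{1/2} > 0$). Define $v \in \mathbb{R}^n$ by $v_i = -\tau g_i / \|g\|_{\mathcal{R}}$ for $i \in \mathcal{R}$ and $v_i = 0$ otherwise. Then $\|v\|_0 \le T$, $\|v\|_2 = \tau$, and $\langle v, g\rangle = -\tau \|g\|_{\mathcal{R}} \le \langle u, g\rangle$ for every $u$ with $\|u\|_0 \le T$ and $\|u\|_2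 \le \tau$. -/
theorem stmt16 {n : ℕ} (g : Fin n → ℝ) (T : ℕ) (hT1 : 1 ≤ T) (hTn : T ≤ n)
    (τ : ℝ) (hτ : 0 < τ) (R : Finset (Fin n)) (hcard : R.card = T)
    (hlarge : ∀ i ∈ R, ∀ j ∉ R, |g j| ≤ |g i|)
    (hpos : 0 < Real.sqrt (∑ i ∈ R, (g i) ^ 2))
    (v : Fin n → ℝ)
    (hv : ∀ i, v i = if i ∈ R then -τ * g i / Real.sqrt (∑ i' ∈ R, (g i') ^ 2) else 0) :
    (Finset.univ.filter (fun i => v i ≠ 0)).card ≤ T ∧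
    Real.sqrt (∑ i, (v i) ^ 2) = τ ∧
    ∑ i, v i * g i = -(τ * Real.sqrt (∑ i ∈ R, (g i) ^ 2)) ∧
    ∀ u : Fin n → ℝ, (Finset.univ.filter (fun i => u i ≠ 0)).card ≤ T →
      Real.sqrt (∑ i, (u i) ^ 2) ≤ τ → ∑ i, v i * g i ≤ ∑ i, u i * g i := by
  set s := Real.sqrt (∑ i ∈ R, (g i) ^ 2) with hs_def
  have hsum_nonneg : (0:ℝ) ≤ ∑ i ∈ R, (g i)^2 := Finset.sum_nonneg fun i _ => sq_nonneg _
  have hs2 : s^2 = ∑ i ∈ R, (g i)^2 := Real.sq_sqrt hsum_nonneg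
  have hs0 : s ≠ 0 := ne_of_gt hpos
  have hsub : (Finset.univ.filter fun i => v i ≠ 0) ⊆ R := by
    intro i hi
    simp only [Finset.mem_filter] at hi
    by_contra h
    exact hi.2 (by rw [hv i, if_neg h])
  have hvg : ∑ i, v i * g i = -(τ * s) := by
    have h1 : ∑ i, v i * g i = ∑ i ∈ R, v i * g i := by
      refine (Finset.sum_subset (Finset.subset_univ R) ?_).symm
      intro i _ hi; rw [hv i, if_neg hi]; ring
    rw [h1]
    have h2 : ∀ i ∈ R, v i * g i = -(τ/s) * (g i)^2 := by
      intro i hi; rw [hv i, if_pos hi]; ring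
    rw [Finset.sum_congr rfl h2, ← Finset.mul_sum, ← hs2]
    field_simp
  refine ⟨(Finset.card_le_card hsub).trans (le_of_eq hcard), ?_, hvg, ?_⟩
  · have h1 : ∑ i, (v i)^2 = τ^2 := by
      have h2 : ∑ i, (v i)^2 = ∑ i ∈ R, (v i)^2 := by
        refine (Finset.sum_subset (Finset.subset_univ R) ?_).symm
        intro i _ hi; rw [hv i, if_neg hi]; ring
      have h3 : ∀ i ∈ R, (v i)^2 = τ^2 / s^2 * (g i)^2 := by
        intro i hi; rw [hv i, if_pos hi]; field_simp
      rw [h2, Finset.sum_congr rfl h3, ← Finset.mul_sum, ← hs2]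
      field_simp
    rw [h1, Real.sqrt_sq hτ.le]
  · intro u hcard_u hnorm_u
    set S := Finset.univ.filter fun i => u i ≠ 0 with hS
    have huS : ∑ i, u i * g i = ∑ i ∈ S, u i * g i := by
      refine (Finset.sum_subset (Finset.filter_subset _ _) ?_).symm
      intro i _ hi
      simp only [hS, Finset.mem_filter, Finset.mem_univ, true_and, not_not] at hi
      rw [hi]; ring
    have hcardSR : (S \ R).card ≤ (R \ S).card := by
      have e1 : (S \ R).card + (S ∩ R).card = S.card := Finset.card_sdiff_add_card_inter S R
      have e2 : (R \ S).card + (R ∩ S).card = R.card := Finset.card_sdiff_add_card_inter R S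
      have e3 : (S ∩ R).card = (R ∩ S).card := by rw [Finset.inter_comm]
      have e4 : S.card ≤ R.card := by rw [hcard]; exact hcard_u
      omega
    have hsd : ∑ i ∈ S \ R, (g i)^2 ≤ ∑ i ∈ R \ S, (g i)^2 := by
      rcases Finset.eq_empty_or_nonempty (S \ R) with h | h
      · rw [h, Finset.sum_empty]
        exact Finset.sum_nonneg fun i _ => sq_nonneg _
      · have hRS : (R \ S).Nonempty := by
          rw [← Finset.card_pos] at h ⊢; omega
        set m := (R \ S).inf' hRS (fun i => (g i)^2) with hm
        have hm0 : 0 ≤ m := by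
          obtain ⟨i, _, hi⟩ := Finset.exists_mem_eq_inf' hRS (fun i => (g i)^2)
          rw [hm, hi]; exact sq_nonneg _
        have hub : ∀ j ∈ S \ R, (g j)^2 ≤ m := by
          intro j hj
          rw [Finset.mem_sdiff] at hj
          refine Finset.le_inf' hRS _ fun i hi => ?_
          rw [Finset.mem_sdiff] at hi
          calc (g j)^2 = |g j|^2 := (sq_abs _).symm
            _ ≤ |g i|^2 := pow_le_pow_left₀ (abs_nonneg _) (hlarge i hi.1 j hj.2) 2
            _ = (g i)^2 := sq_abs _
        calc ∑ i ∈ S \ R, (g i)^2 ≤ (S \ R).card • m := Finset.sum_le_card_nsmul _ _ _ hub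
          _ ≤ (R \ S).card • m := by
              rw [nsmul_eq_mul, nsmul_eq_mul]
              exact mul_le_mul_of_nonneg_right (by exact_mod_cast hcardSR) hm0
          _ ≤ ∑ i ∈ R \ S, (g i)^2 :=
              Finset.card_nsmul_le_sum _ _ _ fun i hi => Finset.inf'_le _ hi
    have hcomb : ∑ i ∈ S, (g i)^2 ≤ ∑ i ∈ R, (g i)^2 := by
      rw [← Finset.sum_inter_add_sum_sdiff S R (fun i => (g i)^2),
        ← Finset.sum_inter_add_sum_sdiff R S (fun i => (g i)^2), Finset.inter_comm]
      exact add_le_add_right hsd _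
    have hcs : (∑ i ∈ S, u i * g i)^2 ≤ (∑ i ∈ S, (u i)^2) * (∑ i ∈ S, (g i)^2) :=
      Finset.sum_mul_sq_le_sq_mul_sq S u g
    have hu2 : Real.sqrt (∑ i ∈ S, (u i)^2) ≤ τ := by
      refine le_trans ?_ hnorm_u
      exact Real.sqrt_le_sqrt (Finset.sum_le_sum_of_subset_of_nonneg
        (Finset.filter_subset _ _) fun i _ _ => sq_nonneg _)
    have hg2 : Real.sqrt (∑ i ∈ S, (g i)^2) ≤ s := Real.sqrt_le_sqrt hcomb
    have habs : |∑ i ∈ S, u i * g i| ≤ τ * s := by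
      have h1 := Real.abs_le_sqrt hcs
      rw [Real.sqrt_mul (Finset.sum_nonneg fun i _ => sq_nonneg _)] at h1
      exact h1.trans (mul_le_mul hu2 hg2 (Real.sqrt_nonneg _) hτ.le)
    rw [hvg, huS]
    have := neg_abs_le (∑ i ∈ S, u i * g i)
    linarith
end
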